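/- arXiv:2411.08770 — 2 statements merged into one kernel-verified Lean document; each statement's English description precedes it below -/
import Mathlib

section
/- Let C be a category with binary products and binary coproducts, 𝔸 and O objects of C, A the endofunctor 𝔸 × _, and B the machine endofunctor B X = (𝔸 × X) ⊕ O. Let (T, η, μ) be a monad on C and G an endofunctor on C such that: (A1) G preserves binary coproducts; (A2) there is a natural isomorphism ρ : A ⋙ G ≅ G ⋙ A (i.e. G(𝔸 × X) ≅ 𝔸 × G X naturally); (A3) A has a Kleisli lifting Ā on Kl(T) (an endofunctor with Ā ∘ Free = Free ∘ A), so that by the lifting lemma A has a Kleisli lifting Ã on Kl(T^G). Then the assignment B̂ X = B X on objects, and on a morphism f : X ⟶ Y of Kl(T^G) the composite of the canonical isomorphism G(B X) ≅ G(A X) ⊕ G O (from A1), the map Ã f ⊕ η_{G O}, and the map into T G(B Y) induced by the images under T G of the two coproduct injections A Y → B Y and O → B Y, defines an endofunctor B̂ on Kl(T^G); moreover B̂ is a Kleisli lifting of B for the relative monad, i.e. B̂ ∘ L = L ∘ B. -/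
open CategoryTheory CategoryTheory.Limits

universe v u

variable {C : Type u} [Category.{v} C]

/-- The Kleisli category of the relative monad `T^G` induced by a monad `T` and
an endofunctor `G`: objects are those of `C`, and `Hom(X, Y) = Kl(T)(G X, G Y)`. -/
def RelKleisli (T : Monad C) (G : C ⥤ C) : Type u :=
  InducedCategory (Kleisli T) (fun X : C => Kleisli.mk T (G.obj X))

instance (T : Monad C) (G : C ⥤ C) : Category (RelKleisli T G) :=
  inferInstanceAs (Category (InducedCategory (Kleisli T) (fun X : C => Kleisli.mk T (G.obj X))))

/-- The functor `L : C ⥤ Kl(T^G)` given by `L X = X` and `L f = Free (G f)`. -/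
def relKleisliFree (T : Monad C) (G : C ⥤ C) : C ⥤ RelKleisli T G where
  obj X := X
  map f := InducedCategory.Hom.mk (F := fun X : C => Kleisli.mk T (G.obj X)) ((Kleisli.Adjunction.toKleisli T).map (G.map f))
  map_id X := by apply InducedCategory.Hom.ext; simp only [CategoryTheory.Functor.map_id]; rfl
  map_comp f g := by apply InducedCategory.Hom.ext; simp only [CategoryTheory.Functor.map_comp]; rfl

/-- The lifting `Ã` on morphisms: for `f : X ⟶ Y` in `Kl(T^G)`,
`Ã f = Free(ρ_X) ≫ Ā(f) ≫ Free(ρ_Y⁻¹)`. -/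
def relKleisliLiftMap (T : Monad C) (G A : C ⥤ C) (ρ : A ⋙ G ≅ G ⋙ A)
    (Abar : Kleisli T ⥤ Kleisli T)
    (hAbar : Kleisli.Adjunction.toKleisli T ⋙ Abar =
      A ⋙ Kleisli.Adjunction.toKleisli T)
    {X Y : C}
    (f : (relKleisliFree T G).obj X ⟶ (relKleisliFree T G).obj Y) :
    (relKleisliFree T G).obj (A.obj X) ⟶ (relKleisliFree T G).obj (A.obj Y) :=
  InducedCategory.Hom.mk (F := fun X : C => Kleisli.mk T (G.obj X)) <| show (Kleisli.Adjunction.toKleisli T).obj (G.obj (A.obj X)) ⟶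
      (Kleisli.Adjunction.toKleisli T).obj (G.obj (A.obj Y)) from
    (Kleisli.Adjunction.toKleisli T).map (ρ.hom.app X) ≫
      eqToHom (Functor.congr_obj hAbar (G.obj X)).symm ≫
      Abar.map (show (Kleisli.Adjunction.toKleisli T).obj (G.obj X) ⟶
          (Kleisli.Adjunction.toKleisli T).obj (G.obj Y) from InducedCategory.Hom.hom (F := fun X : C => Kleisli.mk T (G.obj X)) f) ≫
      eqToHom (Functor.congr_obj hAbar (G.obj Y)) ≫
      (Kleisli.Adjunction.toKleisli T).map (ρ.inv.app Y)

variable [HasBinaryProducts C] [HasBinaryCoproducts C]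

/-- The functor `A = 𝔸 × _`. -/
noncomputable def machineA (𝔸 : C) : C ⥤ C := prod.functor.obj 𝔸

/-- The machine endofunctor `B X = (𝔸 × X) ⊕ O`. -/
noncomputable def machineB (𝔸 O : C) : C ⥤ C where
  obj X := (machineA 𝔸).obj X ⨿ O
  map f := coprod.map ((machineA 𝔸).map f) (𝟙 O)
  map_id X := by simp
  map_comp f g := by simp

/-- The candidate lifting `B̂` on morphisms: the composite of the canonical
isomorphism `G(B X) ≅ G(A X) ⨿ G O`, the map `Ã f ⊕ η_{G O}` and the map
induced by the `T G`-images of the two coproduct injections. -/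
noncomputable def machineHatMap (T : Monad C) (G : C ⥤ C) (𝔸 O : C)
    [PreservesColimitsOfShape (Discrete WalkingPair) G]
    (ρ : machineA 𝔸 ⋙ G ≅ G ⋙ machineA 𝔸)
    (Abar : Kleisli T ⥤ Kleisli T)
    (hAbar : Kleisli.Adjunction.toKleisli T ⋙ Abar =
      machineA 𝔸 ⋙ Kleisli.Adjunction.toKleisli T)
    {X Y : C}
    (f : (relKleisliFree T G).obj X ⟶ (relKleisliFree T G).obj Y) :
    (relKleisliFree T G).obj ((machineB 𝔸 O).obj X) ⟶
      (relKleisliFree T G).obj ((machineB 𝔸 O).obj Y) :=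
  InducedCategory.Hom.mk (F := fun X : C => Kleisli.mk T (G.obj X)) <| Kleisli.Hom.mk <| show G.obj ((machineB 𝔸 O).obj X) ⟶ T.obj (G.obj ((machineB 𝔸 O).obj Y)) from
    (PreservesColimitPair.iso G ((machineA 𝔸).obj X) O).inv ≫
      coprod.map
        (show G.obj ((machineA 𝔸).obj X) ⟶ T.obj (G.obj ((machineA 𝔸).obj Y)) from
          (InducedCategory.Hom.hom (F := fun X : C => Kleisli.mk T (G.obj X)) (relKleisliLiftMap T G (machineA 𝔸) ρ Abar hAbar f)).of)
        (T.η.app (G.obj O)) ≫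
      coprod.desc
        (T.map (G.map (coprod.inl : (machineA 𝔸).obj Y ⟶ (machineB 𝔸 O).obj Y)))
        (T.map (G.map (coprod.inr : O ⟶ (machineB 𝔸 O).obj Y)))

/-! Both liftings are conjugates of functors on `Kl(T)` by isomorphisms in the image of `Free`:
`Ã` conjugates `Ā` by `Free(ρ)`, and `B̂ = Ã ⋙ Ĉ`, where `Ĉ` conjugates the Kleisli lifting
`f ↦ [f ≫ T inl, η ≫ T inr]` of `- ⨿ G O` by `Free` of the comparison isomorphism
`G X ⨿ G O ≅ G (X ⨿ O)` provided by (A1). A conjugate of a functor is a functor, and `B̂` lifts `B`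
because `Ā` lifts `A`, `ρ` is natural, and the coproduct comparison is natural.
Unfolding the Kleisli composites in `Ĉ ∘ Ã` gives exactly the formula defining `B̂`. -/

open Kleisli.Adjunction

namespace CategoryTheory.InducedCategory

variable {C₁ C₂ D₁ D₂ : Type*} [Category D₁] [Category D₂] {F₁ : C₁ → D₁} {F₂ : C₂ → D₂}

def conjFunctor (Φ : D₁ ⥤ D₂) (φ : C₁ → C₂) (e : ∀ X, Φ.obj (F₁ X) ≅ F₂ (φ X)) :
    InducedCategory D₁ F₁ ⥤ InducedCategory D₂ F₂ where
  obj := φ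
  map f := homMk ((e _).inv ≫ Φ.map f.hom ≫ (e _).hom)

end CategoryTheory.InducedCategory

namespace CategoryTheory.Kleisli

variable {D : Type*} [Category D] [HasBinaryCoproducts D] (T : Monad D)

lemma coprod_desc_η_comp_map_inj (X Y : D) :
    coprod.desc (T.η.app X ≫ T.map coprod.inl) (T.η.app Y ≫ T.map coprod.inr) = T.η.app (X ⨿ Y) := by
  ext <;> simp only [coprod.inl_desc, coprod.inr_desc] <;> exact (T.η.naturality _).symm

lemma coprod_desc_bind_comp_map_inj {X₁ X₂ Y₁ Y₂ Z₁ Z₂ : D} (a : X₁ ⟶ T.obj Y₁) (b : X₂ ⟶ T.obj Y₂)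
    (a' : Y₁ ⟶ T.obj Z₁) (b' : Y₂ ⟶ T.obj Z₂) :
    coprod.desc ((a ≫ T.map a' ≫ T.μ.app Z₁) ≫ T.map coprod.inl)
        ((b ≫ T.map b' ≫ T.μ.app Z₂) ≫ T.map coprod.inr) =
      coprod.desc (a ≫ T.map coprod.inl) (b ≫ T.map coprod.inr) ≫
        T.map (coprod.desc (a' ≫ T.map coprod.inl) (b' ≫ T.map coprod.inr)) ≫ T.μ.app (Z₁ ⨿ Z₂) := by
  ext <;> simp only [coprod.inl_desc, coprod.inr_desc, coprod.inl_desc_assoc,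
    coprod.inr_desc_assoc, Category.assoc, ← T.map_comp_assoc, Functor.map_comp, T.mu_naturality]

noncomputable def coprodRight (P : D) : Kleisli T ⥤ Kleisli T where
  obj X := mk T (X.of ⨿ P)
  map f := ⟨coprod.desc (f.of ≫ T.map coprod.inl) (T.η.app P ≫ T.map coprod.inr)⟩
  map_id X := Kleisli.hom_ext (coprod_desc_η_comp_map_inj T X.of P)
  map_comp {X Y Z} f g := Kleisli.hom_ext <| by
    simpa using coprod_desc_bind_comp_map_inj T f.of (T.η.app P) g.of (T.η.app P)

lemma coprodRight_map_toKleisli (P : D) {X Y : D} (f : X ⟶ Y) :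
    (coprodRight T P).map ((toKleisli T).map f) = (toKleisli T).map (coprod.map f (𝟙 P)) := by
  apply Kleisli.hom_ext
  change coprod.desc ((f ≫ T.η.app Y) ≫ T.map coprod.inl) (T.η.app P ≫ T.map coprod.inr) =
    coprod.map f (𝟙 P) ≫ T.η.app (Y ⨿ P)
  ext
  · simp only [coprod.inl_desc, coprod.inl_map_assoc, Category.assoc]
    exact congrArg (f ≫ ·) (T.η.naturality _).symm
  · simp only [coprod.inr_desc, coprod.inr_map_assoc]
    exact (T.η.naturality _).symm.trans (Category.id_comp _).symm

end CategoryTheory.Kleisli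

section RelativeKleisliLift

variable {D : Type*} [Category D] (T : Monad D) (G A : D ⥤ D) (ρ : A ⋙ G ≅ G ⋙ A)
  (Abar : Kleisli T ⥤ Kleisli T) (hAbar : toKleisli T ⋙ Abar = A ⋙ toKleisli T)

def relKleisliLiftIso (X : D) :
    Abar.obj ((toKleisli T).obj (G.obj X)) ≅ (toKleisli T).obj (G.obj (A.obj X)) :=
  eqToIso (Functor.congr_obj hAbar (G.obj X)) ≪≫ (toKleisli T).mapIso (ρ.app X).symm

def relKleisliLift : RelKleisli T G ⥤ RelKleisli T G :=
  InducedCategory.conjFunctor Abar A.obj (relKleisliLiftIso T G A ρ Abar hAbar)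

lemma relKleisliLift_map {X Y : D} (f : (relKleisliFree T G).obj X ⟶ (relKleisliFree T G).obj Y) :
    (relKleisliLift T G A ρ Abar hAbar).map f = relKleisliLiftMap T G A ρ Abar hAbar f := by
  apply InducedCategory.hom_ext
  -- After `hom_ext` the objects are `RelKleisli` objects seen through `G.obj`, on which `rw` and
  -- `simp` fail; restating the goal over `Kleisli T` (here by `change`, below by a separate
  -- `have`) avoids this.
  change (relKleisliLiftIso T G A ρ Abar hAbar X).inv ≫
      Abar.map (InducedCategory.Hom.hom (F := fun X : D => Kleisli.mk T (G.obj X)) f) ≫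
      (relKleisliLiftIso T G A ρ Abar hAbar Y).hom = _
  simp [relKleisliLiftIso]
  rfl

lemma relKleisliLift_map_relKleisliFree {X Y : D} (h : X ⟶ Y) :
    (relKleisliLift T G A ρ Abar hAbar).map ((relKleisliFree T G).map h) =
      (relKleisliFree T G).map (A.map h) := by
  apply InducedCategory.hom_ext
  change (relKleisliLiftIso T G A ρ Abar hAbar X).inv ≫ Abar.map ((toKleisli T).map (G.map h)) ≫
      (relKleisliLiftIso T G A ρ Abar hAbar Y).hom = (toKleisli T).map (G.map (A.map h))
  have hAbar_h := Functor.congr_hom hAbar (G.map h)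
  simp only [Functor.comp_map] at hAbar_h
  simp [relKleisliLiftIso, hAbar_h, ← Functor.map_comp]
  exact congrArg (toKleisli T).map (NatIso.naturality_2 ρ h)

end RelativeKleisliLift

section RelativeKleisliCoprod

variable {D : Type*} [Category D] [HasBinaryCoproducts D] (T : Monad D) (G : D ⥤ D)
  [PreservesColimitsOfShape (Discrete WalkingPair) G] (O : D)

noncomputable def relKleisliCoprodRight : RelKleisli T G ⥤ RelKleisli T G :=
  InducedCategory.conjFunctor (Kleisli.coprodRight T (G.obj O)) (· ⨿ O) fun X =>
    (toKleisli T).mapIso (PreservesColimitPair.iso G X O)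

lemma relKleisliCoprodRight_map_relKleisliFree {X Y : D} (h : X ⟶ Y) :
    (relKleisliCoprodRight T G O).map ((relKleisliFree T G).map h) =
      (relKleisliFree T G).map (coprod.map h (𝟙 O)) := by
  have conj : (toKleisli T).map (PreservesColimitPair.iso G X O).inv ≫
      (Kleisli.coprodRight T (G.obj O)).map ((toKleisli T).map (G.map h)) ≫
      (toKleisli T).map (PreservesColimitPair.iso G Y O).hom =
    (toKleisli T).map (G.map (coprod.map h (𝟙 O))) := by
    erw [Kleisli.coprodRight_map_toKleisli, ← Functor.map_comp, ← Functor.map_comp]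
    congr 1
    rw [Iso.inv_comp_eq]
    simp only [PreservesColimitPair.iso_hom]
    rw [← G.map_id, ← coprodComparison_natural]
  exact InducedCategory.hom_ext conj

lemma relKleisliCoprodRight_map {X Y : D}
    (g : (relKleisliFree T G).obj X ⟶ (relKleisliFree T G).obj Y) :
    (relKleisliCoprodRight T G O).map g =
      InducedCategory.Hom.mk (F := fun X : D => Kleisli.mk T (G.obj X)) (Kleisli.Hom.mk
        ((PreservesColimitPair.iso G X O).inv ≫
          coprod.map (InducedCategory.Hom.hom (F := fun X : D => Kleisli.mk T (G.obj X)) g).of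
            (T.η.app (G.obj O)) ≫
          coprod.desc (T.map (G.map coprod.inl)) (T.map (G.map coprod.inr)))) := by
  have conj : ∀ a : G.obj X ⟶ T.obj (G.obj Y),
      (toKleisli T).map (PreservesColimitPair.iso G X O).inv ≫
        (Kleisli.coprodRight T (G.obj O)).map (Kleisli.Hom.mk a) ≫
        (toKleisli T).map (PreservesColimitPair.iso G Y O).hom =
      Kleisli.Hom.mk ((PreservesColimitPair.iso G X O).inv ≫ coprod.map a (T.η.app (G.obj O)) ≫
          coprod.desc (T.map (G.map coprod.inl)) (T.map (G.map coprod.inr))) := by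
    intro a
    apply Kleisli.hom_ext
    change ((PreservesColimitPair.iso G X O).inv ≫ T.η.app (G.obj X ⨿ G.obj O)) ≫
        T.map (coprod.desc (a ≫ T.map coprod.inl) (T.η.app (G.obj O) ≫ T.map coprod.inr) ≫
          T.map (coprodComparison G Y O ≫ T.η.app (G.obj (Y ⨿ O))) ≫ T.μ.app (G.obj (Y ⨿ O))) ≫
          T.μ.app (G.obj (Y ⨿ O)) = _
    rw [Category.assoc, ← T.η.naturality_assoc, T.left_unit, Category.comp_id]
    simp only [Functor.id_map, Functor.map_comp, Category.assoc, T.right_unit]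
    congr 1
    ext <;> simp [← Functor.map_comp]
  exact InducedCategory.hom_ext (conj _)

end RelativeKleisliCoprod

section Machine

variable (T : Monad C) (G : C ⥤ C) (𝔸 O : C) [PreservesColimitsOfShape (Discrete WalkingPair) G]
  (ρ : machineA 𝔸 ⋙ G ≅ G ⋙ machineA 𝔸) (Abar : Kleisli T ⥤ Kleisli T)
  (hAbar : toKleisli T ⋙ Abar = machineA 𝔸 ⋙ toKleisli T)

noncomputable def machineHat : RelKleisli T G ⥤ RelKleisli T G :=
  relKleisliLift T G (machineA 𝔸) ρ Abar hAbar ⋙ relKleisliCoprodRight T G O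

lemma machineHat_map {X Y : C} (f : (relKleisliFree T G).obj X ⟶ (relKleisliFree T G).obj Y) :
    (machineHat T G 𝔸 O ρ Abar hAbar).map f = machineHatMap T G 𝔸 O ρ Abar hAbar f :=
  (congrArg (relKleisliCoprodRight T G O).map (relKleisliLift_map T G _ ρ Abar hAbar f)).trans
    (relKleisliCoprodRight_map T G O _)

lemma machineHat_map_relKleisliFree {X Y : C} (h : X ⟶ Y) :
    (machineHat T G 𝔸 O ρ Abar hAbar).map ((relKleisliFree T G).map h) =
      (relKleisliFree T G).map ((machineB 𝔸 O).map h) :=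
  (congrArg (relKleisliCoprodRight T G O).map
      (relKleisliLift_map_relKleisliFree T G _ ρ Abar hAbar h)).trans
    (relKleisliCoprodRight_map_relKleisliFree T G O ((machineA 𝔸).map h))

end Machine

/-- Under (A1)–(A3), the assignment `X ↦ B X`, `f ↦ B̂ f` defines an endofunctor
`B̂` on `Kl(T^G)` which is a Kleisli lifting of the machine endofunctor `B`,
i.e. `L ⋙ B̂ = B ⋙ L`. -/
theorem machine_relative_kleisli_lifting (T : Monad C) (G : C ⥤ C) (𝔸 O : C)
    [PreservesColimitsOfShape (Discrete WalkingPair) G]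
    (ρ : machineA 𝔸 ⋙ G ≅ G ⋙ machineA 𝔸)
    (Abar : Kleisli T ⥤ Kleisli T)
    (hAbar : Kleisli.Adjunction.toKleisli T ⋙ Abar =
      machineA 𝔸 ⋙ Kleisli.Adjunction.toKleisli T) :
    ∃ (Bhat : RelKleisli T G ⥤ RelKleisli T G)
      (hobj : ∀ X : C, Bhat.obj ((relKleisliFree T G).obj X) =
        (relKleisliFree T G).obj ((machineB 𝔸 O).obj X)),
      (∀ (X Y : C) (f : (relKleisliFree T G).obj X ⟶ (relKleisliFree T G).obj Y),
        Bhat.map f =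
          eqToHom (hobj X) ≫ machineHatMap T G 𝔸 O ρ Abar hAbar f ≫
            eqToHom (hobj Y).symm) ∧
      relKleisliFree T G ⋙ Bhat = machineB 𝔸 O ⋙ relKleisliFree T G :=
  ⟨machineHat T G 𝔸 O ρ Abar hAbar, fun _ => rfl,
    fun _ _ f => (machineHat_map T G 𝔸 O ρ Abar hAbar f).trans (eq_conj_eqToHom _),
    CategoryTheory.Functor.ext (fun _ => rfl) fun _ _ h =>
      (machineHat_map_relKleisliFree T G 𝔸 O ρ Abar hAbar h).trans (eq_conj_eqToHom _)⟩
end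

section
/- Let F : Type u ⥤ Type u be a functor that preserves weak pullbacks. For a type X let E X := {p : Set X × X // p.2 ∈ p.1}, and define ϑ_X : F.obj (Set X) → Set (F.obj X) by ϑ_X t = { s | ∃ w : F.obj (E X), F.map (fun p => p.val.1) w = t ∧ F.map (fun p => p.val.2) w = s }. Then ϑ is a Kl-law for the powerset monad Set, i.e.: (naturality) for every g : X → Y and every t : F.obj (Set X), Set.image (F.map g) (ϑ_X t) = ϑ_Y (F.map (Set.image g) t); (unit law) for every s : F.obj X, ϑ_X (F.map (fun x => {x}) s) = {s}; (multiplication law) for every t : F.obj (Set (Set X)), ϑ_X (F.map Set.sUnion t) = ⋃₀ (Set.image ϑ_X (ϑ_{Set X} t)). -/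
/-!
Write `F.relLift R : F.obj A → F.obj B → Prop` for the (Barr) relation lifting of `R`, the image
under `F` of the subtype of `A × B` carved out by `R`; then `ϑ t = {s | F.relLift (∋) t s}`.
Lifting turns graphs of functions into graphs and, as soon as `F` preserves weak pullbacks,
also preserves relational composition. The three laws of a Kl-law are then the liftings of the
identities `(∋) ; graph g = graph (g '') ; (∋)`, `graph {·} ; (∋) = (=)` and
`graph ⋃₀ ; (∋) = (∋) ; (∋)` between relations on sets.
-/

open CategoryTheory

universe u

/-- A commuting square of functions that is a weak pullback. -/
def IsWeakPullback {P X Y Z : Type u} (p : P → X) (q : P → Y)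
    (f : X → Z) (g : Y → Z) : Prop :=
  (∀ w, f (p w) = g (q w)) ∧
  ∀ x y, f x = g y → ∃ w, p w = x ∧ q w = y

/-- A functor on types preserves weak pullbacks if it maps weak pullback
squares to weak pullback squares. -/
def PreservesWeakPullbacks (F : Type u ⥤ Type u) : Prop :=
  ∀ {P X Y Z : Type u} (p : P → X) (q : P → Y) (f : X → Z) (g : Y → Z),
    IsWeakPullback p q f g →
    IsWeakPullback (F.map (↾p)) (F.map (↾q)) (F.map (↾f)) (F.map (↾g))

/-- The candidate Kl-law `ϑ : F ∘ Set ⟹ Set ∘ F` obtained as the relation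
lifting of the membership relation, encoded by the type
`E X = {p : Set X × X // p.2 ∈ p.1}`. -/
def powKlLaw (F : Type u ⥤ Type u) (X : Type u) (t : F.obj (Set X)) :
    Set (F.obj X) :=
  {s | ∃ w : F.obj {p : Set X × X // p.2 ∈ p.1},
    F.map (↾(fun p => p.val.1)) w = t ∧ F.map (↾(fun p => p.val.2)) w = s}

theorem isWeakPullback_subtype {X Y Z : Type u} (f : X → Z) (g : Y → Z) :
    IsWeakPullback (fun p : {p : X × Y // f p.1 = g p.2} => p.1.1) (fun p => p.1.2) f g :=
  ⟨fun p => p.2, fun x y h => ⟨⟨(x, y), h⟩, rfl, rfl⟩⟩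

theorem PreservesWeakPullbacks.exists_of_map_eq {F : Type u ⥤ Type u}
    (hF : PreservesWeakPullbacks F) {X Y Z : Type u} {f : X → Z} {g : Y → Z}
    {x : F.obj X} {y : F.obj Y} (h : F.map (↾f) x = F.map (↾g) y) :
    ∃ u : F.obj {p : X × Y // f p.1 = g p.2},
      F.map (↾(fun p => p.1.1)) u = x ∧ F.map (↾(fun p => p.1.2)) u = y :=
  (hF _ _ f g (isWeakPullback_subtype f g)).2 x y h

namespace CategoryTheory.Functor

variable (F : Type u ⥤ Type u) {A B C : Type u}

theorem map_map_apply (f : A → B) (g : B → C) (x : F.obj A) :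
    F.map (↾g) (F.map (↾f) x) = F.map (↾(g ∘ f)) x :=
  (F.map_comp_apply (↾f) (↾g) x).symm

def relLift (R : A → B → Prop) (x : F.obj A) (y : F.obj B) : Prop :=
  ∃ w : F.obj {p : A × B // R p.1 p.2},
    F.map (↾(fun p => p.1.1)) w = x ∧ F.map (↾(fun p => p.1.2)) w = y

theorem relLift_graph (f : A → B) {x : F.obj A} {y : F.obj B} :
    F.relLift (f · = ·) x y ↔ F.map (↾f) x = y := by
  constructor
  · rintro ⟨w, rfl, rfl⟩
    rw [map_map_apply]
    exact congrArg (F.map · w) (ConcreteCategory.hom_ext _ _ fun p => p.2)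
  · rintro rfl
    refine ⟨F.map (↾fun a => (⟨(a, f a), rfl⟩ : {p : A × B // f p.1 = p.2})) x, ?_, ?_⟩ <;>
      rw [map_map_apply]
    exact F.map_id_apply A x

theorem relLift_eq {x y : F.obj A} : F.relLift (· = ·) x y ↔ x = y :=
  (F.relLift_graph id).trans (iff_of_eq (congrArg (· = y) (F.map_id_apply A x)))

variable {F}

/-- The two halves of a lifted composite are glued along the weak pullback over `F.obj B`. -/
theorem relLift_comp (hF : PreservesWeakPullbacks F) {R : A → B → Prop} {S : B → C → Prop}
    {x : F.obj A} {z : F.obj C} :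
    F.relLift (Relation.Comp R S) x z ↔ ∃ y, F.relLift R x y ∧ F.relLift S y z := by
  constructor
  · rintro ⟨w, rfl, rfl⟩
    choose b hRb hSb using fun p : {p : A × C // Relation.Comp R S p.1 p.2} => p.2
    let left : _ → {q : A × B // R q.1 q.2} := fun p => ⟨(p.1.1, b p), hRb p⟩
    let right : _ → {q : B × C // S q.1 q.2} := fun p => ⟨(b p, p.1.2), hSb p⟩
    refine ⟨F.map (↾b) w, ⟨F.map (↾left) w, ?_, ?_⟩, ⟨F.map (↾right) w, ?_, ?_⟩⟩ <;>
      rw [map_map_apply]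
  · rintro ⟨y, ⟨v, rfl, rfl⟩, ⟨w, hw, rfl⟩⟩
    obtain ⟨u, rfl, rfl⟩ := hF.exists_of_map_eq hw.symm
    refine ⟨F.map (↾fun q => (⟨(q.1.1.1.1, q.1.2.1.2), q.1.1.1.2, q.1.1.2, q.2 ▸ q.1.2.2⟩ :
      {p : A × C // Relation.Comp R S p.1 p.2})) u, ?_, ?_⟩ <;>
      rw [map_map_apply, map_map_apply]

theorem relLift_precomp (hF : PreservesWeakPullbacks F) (f : A → B) {R : B → C → Prop}
    {x : F.obj A} {z : F.obj C} :
    F.relLift (fun a c => R (f a) c) x z ↔ F.relLift R (F.map (↾f) x) z := by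
  rw [← Relation.fun_eq_comp (r := R) f, relLift_comp hF]
  simp only [relLift_graph, exists_eq_left']

end CategoryTheory.Functor

open Functor

theorem mem_powKlLaw {F : Type u ⥤ Type u} {X : Type u} {t : F.obj (Set X)} {s : F.obj X} :
    s ∈ powKlLaw F X t ↔ F.relLift (fun S x => x ∈ S) t s :=
  Iff.rfl

/-- If `F` preserves weak pullbacks, then `ϑ = powKlLaw F` is a Kl-law for the
powerset monad: it is natural, and compatible with the unit and multiplication
of the powerset monad. -/
theorem powKlLaw_is_klLaw (F : Type u ⥤ Type u)
    (hF : PreservesWeakPullbacks F) :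
    (∀ (X Y : Type u) (g : X → Y) (t : F.obj (Set X)),
      F.map (↾g) '' powKlLaw F X t = powKlLaw F Y (F.map (↾(Set.image g)) t)) ∧
    (∀ (X : Type u) (s : F.obj X),
      powKlLaw F X (F.map (↾(fun x => ({x} : Set X))) s) = {s}) ∧
    (∀ (X : Type u) (t : F.obj (Set (Set X))),
      powKlLaw F X (F.map (↾Set.sUnion) t) =
        ⋃₀ (powKlLaw F X '' powKlLaw F (Set X) t)) := by
  refine ⟨fun X Y g t => ?_, fun X s => ?_, fun X t => ?_⟩
  · ext s
    calc s ∈ F.map (↾g) '' powKlLaw F X t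
        ↔ F.relLift (Relation.Comp (fun S x => x ∈ S) (g · = ·)) t s := by
          simp only [relLift_comp hF, relLift_graph, Set.mem_image, mem_powKlLaw]
      _ ↔ s ∈ powKlLaw F Y (F.map (↾(Set.image g)) t) :=
          relLift_precomp hF (Set.image g) (R := fun S y => y ∈ S)
  · have singleton_mem : (fun x (y : X) => y ∈ ({x} : Set X)) = (· = ·) := by
      ext x y
      exact Set.mem_singleton_iff.trans eq_comm
    ext s'
    rw [mem_powKlLaw, ← relLift_precomp hF, singleton_mem, relLift_eq, Set.mem_singleton_iff,
      eq_comm]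
  · have sUnion_mem : (fun (T : Set (Set X)) (x : X) => x ∈ ⋃₀ T) =
        Relation.Comp (fun T S => S ∈ T) (fun S x => x ∈ S) := by
      ext T x
      simp only [Set.mem_sUnion, Relation.Comp]
    ext s
    rw [mem_powKlLaw, ← relLift_precomp hF, sUnion_mem, relLift_comp hF]
    simp only [Set.sUnion_image, Set.mem_iUnion, mem_powKlLaw, exists_prop]
end
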